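/- arXiv:1101.0303 — 2 statements merged into one kernel-verified Lean document; each statement's English description precedes it below -/
import Mathlib

section
/- If closed subspaces X and Y of a Hilbert space H commute (i.e., their projections commute), then for any closed subspace Z commuting with both, the distributive law Z ∩ (X ∨ Y) = (Z ∩ X) ∨ (Z ∩ Y) holds, where X ∨ Y denotes the closed span of X ∪ Y. -/
noncomputable section

variable {H : Type*} [NormedAddCommGroup H] [InnerProductSpace ℂ H]

/-- The set of atomic propositions (closed subspaces) satisfied at a state:
`L(ψ) = {Z ∈ AP | ψ ∈ Z}`. -/
def QLabel (AP : Set (Submodule ℂ H)) (ψ : H) : Set (Submodule ℂ H) :=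
  {Z | Z ∈ AP ∧ ψ ∈ Z}

/-- Satisfaction: `ψ ⊨ X` iff `⋂ {Z ∈ AP | ψ ∈ Z} ⊆ X`. -/
def QSat (AP : Set (Submodule ℂ H)) (ψ : H) (X : Submodule ℂ H) : Prop :=
  sInf (QLabel AP ψ) ≤ X

/-- Two closed subspaces commute (their orthogonal projections commute); this is the
standard lattice-theoretic characterization `X = (X ⊓ Y) ⊔ (X ⊓ Yᗮ)`, which for closed
subspaces of a Hilbert space is equivalent to `P_X P_Y = P_Y P_X`. -/
def QCommutes (X Y : Submodule ℂ H) : Prop :=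
  X = (X ⊓ Y) ⊔ (X ⊓ Yᗮ)

/-- The join of two subspaces: the smallest closed subspace containing their union. -/
def QJoin (X Y : Submodule ℂ H) : Submodule ℂ H :=
  (X ⊔ Y).topologicalClosure

/-- The assumptions on `AP` of Lemma 3 (commut1): elements pairwise commute, and `AP`
is closed under join. -/
def APGood (AP : Set (Submodule ℂ H)) : Prop :=
  (∀ Z₁ ∈ AP, ∀ Z₂ ∈ AP, QCommutes Z₁ Z₂) ∧
  (∀ Z₁ ∈ AP, ∀ Z₂ ∈ AP, QJoin Z₁ Z₂ ∈ AP)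

variable {Act : Type*}

/-- `φ` is reachable from `ψ` by a finite sequence of the unitaries `U_α`. -/
def QReach (U : Act → (H ≃ₗᵢ[ℂ] H)) (ψ φ : H) : Prop :=
  ∃ l : List Act, φ = l.foldl (fun x α => U α x) ψ

/-- A path of the quantum automaton `(Act, U, I)`. -/
def QPath (U : Act → (H ≃ₗᵢ[ℂ] H)) (I : Submodule ℂ H) (π : ℕ → H) : Prop :=
  π 0 ∈ I ∧ ∀ n, ∃ α, π (n + 1) = U α (π n)

/-- `A ⊨ inv X`: every state reachable from an initial state satisfies `X`. -/
def QInv (U : Act → (H ≃ₗᵢ[ℂ] H)) (I : Submodule ℂ H)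
    (AP : Set (Submodule ℂ H)) (X : Submodule ℂ H) : Prop :=
  ∀ ψ ∈ I, ∀ φ, QReach U ψ φ → QSat AP φ X

/-- `A ⊨ pers X`: along every path, eventually all states satisfy `X`. -/
def QPers (U : Act → (H ≃ₗᵢ[ℂ] H)) (I : Submodule ℂ H)
    (AP : Set (Submodule ℂ H)) (X : Submodule ℂ H) : Prop :=
  ∀ π : ℕ → H, QPath U I π → ∃ m, ∀ n ≥ m, QSat AP (π n) X

/-!
Since `Z` commutes with `X`, the projection `P_Z` maps `X` into `Z ⊓ X`, and likewise `Y` into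
`Z ⊓ Y`; hence it maps `X ⊔ Y` into `(Z ⊓ X) ⊔ (Z ⊓ Y)` and, being continuous, the closure of the
one into the closure of the other. A vector of `Z` in the closure of `X ⊔ Y` is fixed by `P_Z`,
so it lies in the closure of `(Z ⊓ X) ⊔ (Z ⊓ Y)` (an instance of the Foulis–Holland theorem).
-/

open Submodule
open scoped InnerProductSpace

theorem QCommutes.starProjection_mem_inf {X Z : Submodule ℂ H} [Z.HasOrthogonalProjection]
    (hZX : QCommutes Z X) {x : H} (hx : x ∈ X) : Z.starProjection x ∈ Z ⊓ X := by
  have hsplit : Z.starProjection x ∈ (Z ⊓ X) ⊔ (Z ⊓ Xᗮ) := hZX ▸ Z.starProjection_apply_mem x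
  obtain ⟨a, ha, b, hb, hab⟩ := mem_sup.1 hsplit
  have hb_zero : b = 0 := by
    refine inner_self_eq_zero (𝕜 := ℂ) |>.1 ?_
    calc ⟪b, b⟫_ℂ = ⟪b, Z.starProjection x⟫_ℂ := by
          rw [← hab, inner_add_right, inner_left_of_mem_orthogonal ha.2 hb.2, zero_add]
      _ = ⟪b, x⟫_ℂ := by
          rw [← inner_starProjection_left_eq_right, starProjection_eq_self_iff.2 hb.1]
      _ = 0 := inner_left_of_mem_orthogonal hx hb.2
  rw [← hab, hb_zero, add_zero]
  exact ha

theorem QCommutes.map_starProjection_sup_le {X Y Z : Submodule ℂ H} [Z.HasOrthogonalProjection]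
    (hZX : QCommutes Z X) (hZY : QCommutes Z Y) :
    (X ⊔ Y).map (Z.starProjection : H →ₗ[ℂ] H) ≤ (Z ⊓ X) ⊔ (Z ⊓ Y) := by
  rw [Submodule.map_sup]
  exact sup_le_sup (map_le_iff_le_comap.2 fun _ => hZX.starProjection_mem_inf)
    (map_le_iff_le_comap.2 fun _ => hZY.starProjection_mem_inf)

theorem inf_qJoin_le_qJoin_inf {X Y Z : Submodule ℂ H} [Z.HasOrthogonalProjection]
    (hZX : QCommutes Z X) (hZY : QCommutes Z Y) :
    Z ⊓ QJoin X Y ≤ QJoin (Z ⊓ X) (Z ⊓ Y) := by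
  rintro ψ ⟨hψZ, hψJ⟩
  rw [← starProjection_eq_self_iff.2 hψZ]
  exact map_mem_closure (Z.starProjection).continuous hψJ fun x hx =>
    hZX.map_starProjection_sup_le hZY ⟨x, hx, rfl⟩

theorem qJoin_mono {X X' Y Y' : Submodule ℂ H} (hX : X ≤ X') (hY : Y ≤ Y') :
    QJoin X Y ≤ QJoin X' Y' :=
  topologicalClosure_mono (sup_le_sup hX hY)

theorem qJoin_le {X Y Z : Submodule ℂ H} (hZ : IsClosed (Z : Set H)) (hX : X ≤ Z) (hY : Y ≤ Z) :
    QJoin X Y ≤ Z :=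
  topologicalClosure_minimal _ (sup_le hX hY) hZ

theorem stmt2_general [CompleteSpace H] (X Y Z : Submodule ℂ H)
    (hZ : IsClosed (Z : Set H))
    (hZX : QCommutes Z X) (hZY : QCommutes Z Y) :
    Z ⊓ QJoin X Y = QJoin (Z ⊓ X) (Z ⊓ Y) := by
  have : CompleteSpace Z := hZ.completeSpace_coe
  refine le_antisymm (inf_qJoin_le_qJoin_inf hZX hZY) (le_inf ?_ ?_)
  · exact qJoin_le hZ inf_le_left inf_le_left
  · exact qJoin_mono inf_le_right inf_le_right

/-- distributivity for pairwise commuting closed subspaces: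
`Z ⊓ (X ∨ Y) = (Z ⊓ X) ∨ (Z ⊓ Y)`. -/
theorem stmt2 [CompleteSpace H] (X Y Z : Submodule ℂ H)
    (hX : IsClosed (X : Set H)) (hY : IsClosed (Y : Set H)) (hZ : IsClosed (Z : Set H))
    (hXY : QCommutes X Y) (hZX : QCommutes Z X) (hZY : QCommutes Z Y) :
    Z ⊓ QJoin X Y = QJoin (Z ⊓ X) (Z ⊓ Y) :=
  stmt2_general X Y Z hZ hZX hZY
end
end

section
/- In the Hilbert space l₂ of two-sided square-summable sequences with orthonormal basis {|n⟩ : n ∈ ℤ}, the translation operator U₊ defined by U₊|n⟩ = |n+1⟩ is unitary. For the quantum automaton A with single action U₊ and initial space I = span{|0⟩}, and AP = {[k), (k−1], l₂} where [k) = closed span{|n⟩ : n ≥ k} and (k−1] = closed span{|n⟩ : n ≤ k−1} for a fixed integer k > 0: A ⊨ pers [k) holds but A ⊨ inv [k) does not hold. -/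
noncomputable section

variable {H : Type*} [NormedAddCommGroup H] [InnerProductSpace ℂ H]

variable {Act : Type*}

/-- The Hilbert space `l₂` of two-sided square-summable sequences. -/
abbrev l2Z : Type := lp (fun _ : ℤ => ℂ) 2

/-- The basis vector `|n⟩` of `l₂`. -/
noncomputable def ket (n : ℤ) : l2Z := lp.single 2 n (1 : ℂ)

/-!
The shift `U₊` is the unitary carrying the Hilbert basis `(|n⟩)` to its reindexing `(|n + 1⟩)`.
With a single action, a path starting in `span{|0⟩}` is `n ↦ c • |n⟩`, which lies in `[k)` from
step `k` on. Invariance fails already at the initial state: `|0⟩` is orthogonal to every `|n⟩`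
with `n ≥ k`, hence to their closed span `[k)`.
-/

section QuantumAutomaton

variable {AP : Set (Submodule ℂ H)} {ψ : H} {X : Submodule ℂ H}

theorem QSat.of_mem (hX : X ∈ AP) (hψ : ψ ∈ X) : QSat AP ψ X :=
  sInf_le ⟨hX, hψ⟩

theorem QSat.mem (h : QSat AP ψ X) : ψ ∈ X :=
  h <| Submodule.mem_sInf.2 fun _ hZ => hZ.2

theorem QInv.le {U : Act → (H ≃ₗᵢ[ℂ] H)} {I : Submodule ℂ H} (h : QInv U I AP X) : I ≤ X :=
  fun ψ hψ => (h ψ hψ ψ ⟨[], rfl⟩).mem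

theorem QPath.exists_eq_smul_iterate {U : H ≃ₗᵢ[ℂ] H} {ψ₀ : H} {π : ℕ → H}
    (hπ : QPath (fun _ : Act => U) (ℂ ∙ ψ₀) π) : ∃ c : ℂ, ∀ n, π n = c • U^[n] ψ₀ := by
  obtain ⟨c, hc⟩ := Submodule.mem_span_singleton.1 hπ.1
  refine ⟨c, fun n => ?_⟩
  induction n with
  | zero => exact hc.symm
  | succ n ih =>
    obtain ⟨_, hstep⟩ := hπ.2 n
    rw [hstep, ih, map_smul, Function.iterate_succ_apply']

theorem qPers_of_eventually_iterate_mem {U : H ≃ₗᵢ[ℂ] H} {ψ₀ : H} (hX : X ∈ AP)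
    (h : ∀ᶠ n in Filter.atTop, U^[n] ψ₀ ∈ X) : QPers (fun _ : Act => U) (ℂ ∙ ψ₀) AP X := by
  intro π hπ
  obtain ⟨c, hc⟩ := hπ.exists_eq_smul_iterate
  obtain ⟨m, hm⟩ := Filter.eventually_atTop.1 h
  exact ⟨m, fun n hn => QSat.of_mem hX (hc n ▸ X.smul_mem c (hm n hn))⟩

end QuantumAutomaton

section HilbertBasis

variable {ι ι' 𝕜 E : Type*} [RCLike 𝕜] [NormedAddCommGroup E] [InnerProductSpace 𝕜 E]

theorem Orthonormal.apply_notMem_closure_span_image {v : ι → E} (hv : Orthonormal 𝕜 v)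
    {s : Set ι} {i : ι} (hi : i ∉ s) :
    v i ∉ (Submodule.span 𝕜 (v '' s)).topologicalClosure := by
  intro hmem
  have hle : (Submodule.span 𝕜 (v '' s)).topologicalClosure ≤ (𝕜 ∙ v i)ᗮ := by
    refine Submodule.topologicalClosure_minimal _ ?_ (Submodule.isClosed_orthogonal _)
    rw [Submodule.span_le]
    rintro _ ⟨j, hj, rfl⟩
    exact Submodule.mem_orthogonal_singleton_iff_inner_right.2
      (hv.2 fun hij => hi (hij ▸ hj))
  have : v i ∈ (𝕜 ∙ v i) ⊓ (𝕜 ∙ v i)ᗮ := ⟨Submodule.mem_span_singleton_self _, hle hmem⟩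
  rw [Submodule.inf_orthogonal_eq_bot, Submodule.mem_bot] at this
  exact hv.ne_zero i this

protected def HilbertBasis.reindex [CompleteSpace E] (b : HilbertBasis ι 𝕜 E) (e : ι ≃ ι') :
    HilbertBasis ι' 𝕜 E :=
  HilbertBasis.mk (b.orthonormal.comp e.symm e.symm.injective) <| by
    rw [e.symm.surjective.range_comp]
    exact b.dense_span.ge

@[simp]
theorem HilbertBasis.coe_reindex [CompleteSpace E] (b : HilbertBasis ι 𝕜 E) (e : ι ≃ ι') :
    ⇑(b.reindex e) = b ∘ e.symm :=
  HilbertBasis.coe_mk ..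

theorem HilbertBasis.default_apply [DecidableEq ι] (i : ι) :
    (default : HilbertBasis ι 𝕜 (lp (fun _ : ι => 𝕜) 2)) i = lp.single 2 i 1 :=
  (HilbertBasis.repr_symm_single _ i).symm

end HilbertBasis

def ketBasis : HilbertBasis ℤ ℂ l2Z := default

@[simp]
theorem coe_ketBasis : ⇑ketBasis = ket :=
  funext HilbertBasis.default_apply

theorem orthonormal_ket : Orthonormal ℂ ket :=
  coe_ketBasis ▸ ketBasis.orthonormal

def shiftL2 : l2Z ≃ₗᵢ[ℂ] l2Z :=
  ketBasis.repr.trans (ketBasis.reindex (Equiv.addRight 1).symm).repr.symm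

theorem shiftL2_ket (n : ℤ) : shiftL2 (ket n) = ket (n + 1) := by
  classical
  rw [← coe_ketBasis, shiftL2, LinearIsometryEquiv.trans_apply, HilbertBasis.repr_self,
    HilbertBasis.repr_symm_single, HilbertBasis.coe_reindex]
  rfl

theorem shiftL2_iterate_ket_zero (n : ℕ) : shiftL2^[n] (ket 0) = ket n := by
  induction n with
  | zero => rfl
  | succ n ih => rw [Function.iterate_succ_apply', ih, shiftL2_ket, Nat.cast_succ]

/-- Example 3: the translation operator `U₊|n⟩ = |n+1⟩` is unitary, and for
the automaton `A = ({+}, {U₊}, span{|0⟩})` with `AP = {[k), (k−1], l₂}` and `k > 0`,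
`A ⊨ pers [k)` holds but `A ⊨ inv [k)` fails. -/
theorem stmt9 (k : ℤ) (hk : 0 < k) :
    ∃ U : l2Z ≃ₗᵢ[ℂ] l2Z, (∀ n : ℤ, U (ket n) = ket (n + 1)) ∧
      (let upk : Submodule ℂ l2Z :=
        (Submodule.span ℂ {x | ∃ n : ℤ, k ≤ n ∧ x = ket n}).topologicalClosure
       let downk : Submodule ℂ l2Z :=
        (Submodule.span ℂ {x | ∃ n : ℤ, n ≤ k - 1 ∧ x = ket n}).topologicalClosure
       let AP : Set (Submodule ℂ l2Z) := {upk, downk, ⊤}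
       let I : Submodule ℂ l2Z := Submodule.span ℂ {ket 0}
       QPers (fun _ : Unit => U) I AP upk ∧ ¬ QInv (fun _ : Unit => U) I AP upk) := by
  refine ⟨shiftL2, shiftL2_ket, ?_⟩
  intro upk downk AP I
  have hupk : upk = (Submodule.span ℂ (ket '' Set.Ici k)).topologicalClosure := by
    simp only [upk, Set.image, Set.mem_Ici, eq_comm]
  constructor
  · refine qPers_of_eventually_iterate_mem (Or.inl rfl) (Filter.eventually_atTop.2 ⟨k.toNat, ?_⟩)
    intro n hn
    rw [shiftL2_iterate_ket_zero, hupk]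
    exact Submodule.le_topologicalClosure _ (Submodule.subset_span ⟨n, by grind, rfl⟩)
  · intro hinv
    refine orthonormal_ket.apply_notMem_closure_span_image (s := Set.Ici k) (i := 0) ?_ ?_
    · simpa using hk
    · exact hupk ▸ hinv.le (Submodule.mem_span_singleton_self _)
end
end
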